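/- arXiv:2508.04633 — 3 statements merged into one kernel-verified Lean document; each statement's English description precedes it below -/
import Mathlib

section
/- Let p00, p01, p11, p02, p12 be positive reals summing to 1. If p11/(p11+p01) < p12/(p12+p02), then the quantity -p11*p02 - p11*p12 - p02*p12 + p12*(1 - p12) is strictly positive. -/
theorem stmt_2 (p00 p01 p11 p02 p12 : ℝ)
    (h00 : 0 < p00) (h01 : 0 < p01) (h11 : 0 < p11) (h02 : 0 < p02) (h12 : 0 < p12)
    (hsum : p00 + p01 + p11 + p02 + p12 = 1)
    (hlt : p11 / (p11 + p01) < p12 / (p12 + p02)) :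
    0 < -(p11 * p02) - p11 * p12 - p02 * p12 + p12 * (1 - p12) := by
  rw [div_lt_div_iff₀ (by linarith) (by linarith)] at hlt
  nlinarith [mul_pos h12 h00]
end

section
/- Let pC = (pC11, pC02, pC12) and pS = (pS11, pS02, pS12) with all coordinates in (0,1), and suppose in each arm the remaining probabilities pC00, pC01 (resp. pS00, pS01) are positive with total sum 1 per arm. Assume in each arm the death probability given early-stage diagnosis is less than the death probability given late-stage diagnosis, i.e. p11/(p11+p01) < p12/(p12+p02) holds with superscripts C and S. Let r = -(pS02+pS12)/(pC02+pC12)^2, s = 1/(pC02+pC12), t = -(pS11+pS12)/(pC11+pC12)^2, u = 1/(pC11+pC12), A = -pC11*pC02 - pC11*pC12 - pC02*pC12 + pC12*(1-pC12), B = -pS11*pS02 - pS11*pS12 - pS02*pS12 + pS12*(1-pS12), and let c = n/m > 0. Then A*r*t + B*s*u*c > 0. -/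
theorem stmt_3 (pC00 pC01 pC11 pC02 pC12 pS00 pS01 pS11 pS02 pS12 c : ℝ)
    (hC00 : 0 < pC00) (hC01 : 0 < pC01) (hC11 : 0 < pC11 ∧ pC11 < 1)
    (hC02 : 0 < pC02 ∧ pC02 < 1) (hC12 : 0 < pC12 ∧ pC12 < 1)
    (hS00 : 0 < pS00) (hS01 : 0 < pS01) (hS11 : 0 < pS11 ∧ pS11 < 1)
    (hS02 : 0 < pS02 ∧ pS02 < 1) (hS12 : 0 < pS12 ∧ pS12 < 1)
    (hCsum : pC00 + pC01 + pC11 + pC02 + pC12 = 1)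
    (hSsum : pS00 + pS01 + pS11 + pS02 + pS12 = 1)
    (hCcond : pC11 / (pC11 + pC01) < pC12 / (pC12 + pC02))
    (hScond : pS11 / (pS11 + pS01) < pS12 / (pS12 + pS02))
    (hc : 0 < c) :
    let r : ℝ := -(pS02 + pS12) / (pC02 + pC12) ^ 2
    let s : ℝ := 1 / (pC02 + pC12)
    let t : ℝ := -(pS11 + pS12) / (pC11 + pC12) ^ 2
    let u : ℝ := 1 / (pC11 + pC12)
    let A : ℝ := -(pC11 * pC02) - pC11 * pC12 - pC02 * pC12 + pC12 * (1 - pC12)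
    let B : ℝ := -(pS11 * pS02) - pS11 * pS12 - pS02 * pS12 + pS12 * (1 - pS12)
    0 < A * r * t + B * s * u * c := by
  intro r s t u A B
  obtain ⟨hC11p, -⟩ := hC11
  obtain ⟨hC02p, -⟩ := hC02
  obtain ⟨hC12p, -⟩ := hC12
  obtain ⟨hS11p, -⟩ := hS11
  obtain ⟨hS02p, -⟩ := hS02
  obtain ⟨hS12p, -⟩ := hS12
  have hCc : pC11 * pC02 < pC12 * pC01 := by
    rw [div_lt_div_iff₀ (by linarith) (by linarith)] at hCcond
    nlinarith
  have hSc : pS11 * pS02 < pS12 * pS01 := by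
    rw [div_lt_div_iff₀ (by linarith) (by linarith)] at hScond
    nlinarith
  have hA : 0 < A := by
    have : A = pC12 * pC00 + (pC12 * pC01 - pC11 * pC02) := by
      simp only [A]; nlinarith [hCsum]
    nlinarith
  have hB : 0 < B := by
    have : B = pS12 * pS00 + (pS12 * pS01 - pS11 * pS02) := by
      simp only [B]; nlinarith [hSsum]
    nlinarith
  have h1 : 0 < A * r * t := by
    have : A * r * t
        = A * ((pS02 + pS12) / (pC02 + pC12) ^ 2)
            * ((pS11 + pS12) / (pC11 + pC12) ^ 2) := by
      simp only [r, t]; ring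
    rw [this]
    have h2 : (0:ℝ) < (pC02 + pC12) ^ 2 := by positivity
    have h3 : (0:ℝ) < (pC11 + pC12) ^ 2 := by positivity
    positivity
  have h4 : 0 < B * s * u * c := by
    have hsu : (0:ℝ) < pC02 + pC12 := by linarith
    have hsu2 : (0:ℝ) < pC11 + pC12 := by linarith
    simp only [B, s, u]
    positivity
  linarith
end

section
/- If in both arms of a screening trial the conditional death probability given late-stage diagnosis strictly exceeds that given early-stage diagnosis, and all joint probabilities pC00, pC01, pC11, pC02, pC12 and pS00, pS01, pS11, pS02, pS12 are strictly positive (each arm summing to 1), then the asymptotic correlation ρ between Ŝ and M̂ satisfies 0 < ρ ≤ 1. -/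
/-!
The asymptotic covariance `Σ` is block diagonal with multinomial covariance blocks
`diag a - a aᵀ`. Each block is positive semidefinite, since `(∑ aᵢ xᵢ)² ≤ (∑ aᵢ)(∑ aᵢ xᵢ²)` and
`∑ aᵢ ≤ 1`; so `ρ ≤ 1` is the Cauchy–Schwarz inequality for the form `v ⬝ Σ w`.
The gradients are nonzero multiples of the indicators of late stage and of death, so the
variances are positive multiples of binomial variances, and `Σ₁₂ = r t κ_C + c s u κ_S` where
`r, t < 0 < s, u` and `κ` is the covariance of the late-stage and death indicators in an arm.
That covariance equals `p₁₂ p₀₀ + (p₁₂ p₀₁ - p₁₁ p₀₂)`, positive by the hypothesis on the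
conditional death probabilities.
-/

open Matrix

namespace Matrix

variable {ι κ : Type*} [Fintype ι] [Fintype κ]

theorem dotProduct_fromBlocks_zero_mulVec {R : Type*} [CommRing R]
    (A : Matrix ι ι R) (D : Matrix κ κ R) (v w : ι ⊕ κ → R) :
    v ⬝ᵥ fromBlocks A 0 0 D *ᵥ w =
      (v ∘ Sum.inl) ⬝ᵥ A *ᵥ (w ∘ Sum.inl) + (v ∘ Sum.inr) ⬝ᵥ D *ᵥ (w ∘ Sum.inr) := by
  rw [fromBlocks_mulVec, ← Sum.elim_comp_inl_inr v, sumElim_dotProduct_sumElim]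
  simp

theorem PosSemidef.fromBlocks_zero {A : Matrix ι ι ℝ} {D : Matrix κ κ ℝ}
    (hA : A.PosSemidef) (hD : D.PosSemidef) : (fromBlocks A 0 0 D).PosSemidef := by
  refine .of_dotProduct_mulVec_nonneg (hA.isHermitian.fromBlocks (by simp) hD.isHermitian) ?_
  intro x
  rw [star_trivial, dotProduct_fromBlocks_zero_mulVec]
  simpa using add_nonneg (hA.dotProduct_mulVec_nonneg (x ∘ Sum.inl))
    (hD.dotProduct_mulVec_nonneg (x ∘ Sum.inr))

theorem PosSemidef.dotProduct_mulVec_sq_le {M : Matrix ι ι ℝ} (hM : M.PosSemidef)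
    (v w : ι → ℝ) : (v ⬝ᵥ M *ᵥ w) ^ 2 ≤ (v ⬝ᵥ M *ᵥ v) * (w ⬝ᵥ M *ᵥ w) := by
  have hsymm : w ⬝ᵥ M *ᵥ v = v ⬝ᵥ M *ᵥ w := by
    rw [dotProduct_mulVec, ← mulVec_transpose, dotProduct_comm,
      ← conjTranspose_eq_transpose_of_trivial, hM.isHermitian.eq]
  classical
  have := (toBilin' M).apply_mul_apply_le_of_forall_zero_le
    (fun x => by simpa [toBilin'_apply'] using hM.dotProduct_mulVec_nonneg x) v w
  simpa only [toBilin'_apply', hsymm, ← sq] using this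

theorem PosSemidef.dotProduct_mulVec_div_sqrt_le_one {M : Matrix ι ι ℝ} (hM : M.PosSemidef)
    (v w : ι → ℝ) : v ⬝ᵥ M *ᵥ w / √((v ⬝ᵥ M *ᵥ v) * (w ⬝ᵥ M *ᵥ w)) ≤ 1 :=
  div_le_one_of_le₀ ((le_abs_self _).trans (Real.abs_le_sqrt (hM.dotProduct_mulVec_sq_le v w)))
    (Real.sqrt_nonneg _)

end Matrix

section Multinomial

variable {ι : Type*} [Fintype ι] [DecidableEq ι]

def multinomialCov (a : ι → ℝ) : Matrix ι ι ℝ := diagonal a - vecMulVec a a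

omit [Fintype ι] in
theorem multinomialCov_apply (a : ι → ℝ) (i j : ι) :
    multinomialCov a i j = if i = j then a i * (1 - a i) else -(a i * a j) := by
  by_cases h : i = j
  · subst h; simp [multinomialCov, vecMulVec_apply, mul_sub]
  · simp [multinomialCov, vecMulVec_apply, h]

theorem dotProduct_multinomialCov_mulVec (a v w : ι → ℝ) :
    v ⬝ᵥ multinomialCov a *ᵥ w = ∑ i, a i * (v i * w i) - (a ⬝ᵥ v) * (a ⬝ᵥ w) := by
  rw [multinomialCov, sub_mulVec, dotProduct_sub, vecMulVec_mulVec, op_smul_eq_smul,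
    dotProduct_smul, smul_eq_mul, dotProduct_comm v a]
  simp only [dotProduct, mulVec_diagonal]
  congr 1
  · exact Finset.sum_congr rfl fun i _ => by ring
  · ring

theorem posSemidef_multinomialCov {a : ι → ℝ} (ha : 0 ≤ a) (hsum : ∑ i, a i ≤ 1) :
    (multinomialCov a).PosSemidef := by
  refine .of_dotProduct_mulVec_nonneg ?_ fun x => ?_
  · simp [IsHermitian, multinomialCov, conjTranspose_eq_transpose_of_trivial]
  · rw [star_trivial, dotProduct_multinomialCov_mulVec, sub_nonneg, ← sq]
    have hCS : (a ⬝ᵥ x) ^ 2 ≤ (∑ i, a i) * ∑ i, a i * (x i * x i) :=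
      Finset.sum_sq_le_sum_mul_sum_of_sq_le_mul _ (fun i _ => ha i)
        (fun i _ => mul_nonneg (ha i) (mul_self_nonneg _)) (fun i _ => le_of_eq (by ring))
    have hquad : 0 ≤ ∑ i, a i * (x i * x i) :=
      Finset.sum_nonneg fun i _ => mul_nonneg (ha i) (mul_self_nonneg _)
    exact hCS.trans (mul_le_of_le_one_left hquad hsum)

end Multinomial

/-- In `p_dk`, `d` indicates death and `k` the stage at diagnosis (0 none, 1 early, 2 late). -/
theorem lateStage_death_cov_pos {p00 p01 p11 p02 p12 : ℝ} (h00 : 0 ≤ p00) (h12 : 0 ≤ p12)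
    (hE : 0 < p11 + p01) (hL : 0 < p12 + p02) (hsum : p00 + p01 + p11 + p02 + p12 = 1)
    (hcond : p11 / (p11 + p01) < p12 / (p12 + p02)) :
    0 < p12 - (p02 + p12) * (p11 + p12) := by
  rw [div_lt_div_iff₀ hE hL] at hcond
  have hcross : p11 * p02 < p12 * p01 := by linarith
  have hcov : p12 - (p02 + p12) * (p11 + p12) = p12 * p00 + (p12 * p01 - p11 * p02) := by
    linear_combination -p12 * hsum
  rw [hcov]
  linarith [mul_nonneg h12 h00]

theorem stmt_15 (pC00 pC01 pC11 pC02 pC12 pS00 pS01 pS11 pS02 pS12 c : ℝ)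
    (hC : 0 < pC00 ∧ 0 < pC01 ∧ 0 < pC11 ∧ 0 < pC02 ∧ 0 < pC12)
    (hS : 0 < pS00 ∧ 0 < pS01 ∧ 0 < pS11 ∧ 0 < pS02 ∧ 0 < pS12)
    (hCsum : pC00 + pC01 + pC11 + pC02 + pC12 = 1)
    (hSsum : pS00 + pS01 + pS11 + pS02 + pS12 = 1)
    (hCcond : pC11 / (pC11 + pC01) < pC12 / (pC12 + pC02))
    (hScond : pS11 / (pS11 + pS01) < pS12 / (pS12 + pS02))
    (hc : 0 < c) :
    let a : Fin 3 → ℝ := ![pC11, pC02, pC12]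
    let b : Fin 3 → ℝ := ![pS11, pS02, pS12]
    let SigC : Matrix (Fin 3) (Fin 3) ℝ :=
      fun i j => if i = j then a i * (1 - a i) else -(a i * a j)
    let SigS : Matrix (Fin 3) (Fin 3) ℝ :=
      fun i j => c * (if i = j then b i * (1 - b i) else -(b i * b j))
    let Sig : Matrix (Fin 3 ⊕ Fin 3) (Fin 3 ⊕ Fin 3) ℝ := Matrix.fromBlocks SigC 0 0 SigS
    let r : ℝ := -(pS02 + pS12) / (pC02 + pC12) ^ 2
    let s : ℝ := 1 / (pC02 + pC12)
    let t : ℝ := -(pS11 + pS12) / (pC11 + pC12) ^ 2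
    let u : ℝ := 1 / (pC11 + pC12)
    let v1 : Fin 3 ⊕ Fin 3 → ℝ := Sum.elim ![0, r, r] ![0, s, s]
    let v2 : Fin 3 ⊕ Fin 3 → ℝ := Sum.elim ![t, 0, t] ![u, 0, u]
    let Sig11 : ℝ := dotProduct v1 (Sig.mulVec v1)
    let Sig22 : ℝ := dotProduct v2 (Sig.mulVec v2)
    let Sig12 : ℝ := dotProduct v1 (Sig.mulVec v2)
    let ρ : ℝ := Sig12 / Real.sqrt (Sig11 * Sig22)
    0 < ρ ∧ ρ ≤ 1 := by
  obtain ⟨hC00, hC01, hC11, hC02, hC12⟩ := hC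
  obtain ⟨hS00, hS01, hS11, hS02, hS12⟩ := hS
  intro a b SigC SigS Sig r s t u v1 v2 Sig11 Sig22 Sig12 ρ
  have hSig : Sig = fromBlocks (multinomialCov a) 0 0 (c • multinomialCov b) := by
    ext (i | i) (j | j) <;> simp [Sig, SigC, SigS, fromBlocks, multinomialCov_apply]
  have hpsd : Sig.PosSemidef := by
    rw [hSig]
    refine .fromBlocks_zero (posSemidef_multinomialCov ?_ ?_)
      ((posSemidef_multinomialCov ?_ ?_).smul hc.le)
    · intro i; fin_cases i <;> simp [a] <;> positivity
    · simp [a, Fin.sum_univ_three]; linarith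
    · intro i; fin_cases i <;> simp [b] <;> positivity
    · simp [b, Fin.sum_univ_three]; linarith
  have hform (x y x' y' : Fin 3 → ℝ) : Sum.elim x y ⬝ᵥ Sig *ᵥ Sum.elim x' y' =
      x ⬝ᵥ multinomialCov a *ᵥ x' + c * (y ⬝ᵥ multinomialCov b *ᵥ y') := by
    simp [hSig, dotProduct_fromBlocks_zero_mulVec, smul_mulVec]
  have h11 : Sig11 = r ^ 2 * ((pC02 + pC12) * (1 - (pC02 + pC12)))
      + c * (s ^ 2 * ((pS02 + pS12) * (1 - (pS02 + pS12)))) := by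
    simp only [Sig11, v1, hform, dotProduct_multinomialCov_mulVec]
    simp [dotProduct, Fin.sum_univ_three, a, b]
    ring
  have h22 : Sig22 = t ^ 2 * ((pC11 + pC12) * (1 - (pC11 + pC12)))
      + c * (u ^ 2 * ((pS11 + pS12) * (1 - (pS11 + pS12)))) := by
    simp only [Sig22, v2, hform, dotProduct_multinomialCov_mulVec]
    simp [dotProduct, Fin.sum_univ_three, a, b]
    ring
  have h12 : Sig12 = r * t * (pC12 - (pC02 + pC12) * (pC11 + pC12))
      + c * (s * u * (pS12 - (pS02 + pS12) * (pS11 + pS12))) := by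
    simp only [Sig12, v1, v2, hform, dotProduct_multinomialCov_mulVec]
    simp [dotProduct, Fin.sum_univ_three, a, b]
    ring
  have hr : r < 0 := div_neg_of_neg_of_pos (by linarith) (by positivity)
  have ht : t < 0 := div_neg_of_neg_of_pos (by linarith) (by positivity)
  have hpos11 : 0 < Sig11 := by
    have : 0 < 1 - (pC02 + pC12) := by linarith
    have : 0 < 1 - (pS02 + pS12) := by linarith
    rw [h11]; have := hr.ne; positivity
  have hpos22 : 0 < Sig22 := by
    have : 0 < 1 - (pC11 + pC12) := by linarith
    have : 0 < 1 - (pS11 + pS12) := by linarith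
    rw [h22]; have := ht.ne; positivity
  have hpos12 : 0 < Sig12 := by
    have := lateStage_death_cov_pos hC00.le hC12.le (by positivity) (by positivity) hCsum hCcond
    have := lateStage_death_cov_pos hS00.le hS12.le (by positivity) (by positivity) hSsum hScond
    rw [h12]; have := mul_pos_of_neg_of_neg hr ht; positivity
  exact ⟨div_pos hpos12 (Real.sqrt_pos.2 (mul_pos hpos11 hpos22)),
    hpsd.dotProduct_mulVec_div_sqrt_le_one v1 v2⟩
end
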